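/- Let σ(x) = 1/(1+exp(-x)) and ψ(x) = tanh(x), and define HTAF(x | α₀, α₁) = σ(α₁ ψ(α₀ x)). For any ε ∈ (0, 1/2), if α₁ > log((1-ε)/ε) and α₀ ≥ (1/(2ε)) · log( (α₁ + log((1-ε)/ε)) / (α₁ - log((1-ε)/ε)) ), then for all x ≤ -ε, |HTAF(x | α₀, α₁)| ≤ ε. -/

import Mathlib

noncomputable def sigmoid (x : ℝ) : ℝ := 1 / (1 + Real.exp (-x))

noncomputable def HTAF (α₀ α₁ x : ℝ) : ℝ := sigmoid (α₁ * Real.tanh (α₀ * x))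

/-! The threshold on `α₀` is `artanh (L / α₁) / ε` with `L = log ((1 - ε) / ε) = -logit ε`, so
`tanh (α₀ ε) ≥ L / α₁`. For `x ≤ -ε`, monotonicity and oddness of `tanh` give
`α₁ tanh (α₀ x) ≤ -L`, and the sigmoid, being increasing, maps `-L` to `ε`. -/

open Set

theorem sigmoid_eq_real_sigmoid : sigmoid = Real.sigmoid := by
  funext x
  rw [_root_.sigmoid, Real.sigmoid_def, one_div]

namespace Real

theorem tanh_strictMono : StrictMono tanh := fun a b hab => by
  have mem (x : ℝ) : tanh x ∈ Ioo (-1) 1 := ⟨neg_one_lt_tanh x, tanh_lt_one x⟩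
  rwa [← artanh_lt_artanh_iff (mem a) (mem b), artanh_tanh, artanh_tanh]

theorem le_tanh_of_artanh_le {t y : ℝ} (ht : t ∈ Ioo (-1) 1) (h : artanh t ≤ y) :
    t ≤ tanh y := by
  simpa only [tanh_artanh ht] using tanh_strictMono.monotone h

theorem artanh_div_eq_half_log {a b : ℝ} (hb : 0 < b) (hab : a ∈ Icc (-b) b) :
    artanh (a / b) = 1 / 2 * log ((b + a) / (b - a)) := by
  have hmem : a / b ∈ Icc (-1) 1 :=
    ⟨by rw [le_div_iff₀ hb]; linarith [hab.1], by rw [div_le_iff₀ hb]; linarith [hab.2]⟩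
  rw [artanh_eq_half_log hmem]
  congr 2
  field_simp

theorem tanh_mul_le_neg_of_artanh_le {t ε a x : ℝ} (ht : t ∈ Ioo 0 1) (hε : 0 < ε)
    (h : artanh t ≤ a * ε) (hx : x ≤ -ε) : tanh (a * x) ≤ -t := by
  have ha : 0 < a := pos_of_mul_pos_left ((artanh_pos ht).trans_le h) hε.le
  calc tanh (a * x) ≤ tanh (-(a * ε)) := tanh_strictMono.monotone (by nlinarith)
    _ = -tanh (a * ε) := tanh_neg _
    _ ≤ -t := neg_le_neg (le_tanh_of_artanh_le ⟨by linarith [ht.1], ht.2⟩ h)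

theorem sigmoid_neg_log_one_sub_div {ε : ℝ} (hε : ε ∈ Ioo 0 1) :
    sigmoid (-log ((1 - ε) / ε)) = ε := by
  obtain ⟨hε0, hε1⟩ := hε
  rw [sigmoid_def, neg_neg, exp_log (div_pos (by linarith) hε0)]
  field_simp
  ring

end Real

theorem stmt_1 (ε α₀ α₁ : ℝ) (hε : ε ∈ Set.Ioo (0:ℝ) (1/2))
    (hα₁ : α₁ > Real.log ((1 - ε) / ε))
    (hα₀ : α₀ ≥ (1 / (2 * ε)) *
      Real.log ((α₁ + Real.log ((1 - ε) / ε)) / (α₁ - Real.log ((1 - ε) / ε)))) :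
    ∀ x : ℝ, x ≤ -ε → |HTAF α₀ α₁ x| ≤ ε := by
  intro x hx
  obtain ⟨hε0, hε2⟩ := hε
  set L := Real.log ((1 - ε) / ε)
  have hL : 0 < L := Real.log_pos (by rw [one_lt_div hε0]; linarith)
  have hα₁0 : 0 < α₁ := hL.trans hα₁
  have hLα₁ : L / α₁ ∈ Ioo 0 1 := ⟨div_pos hL hα₁0, (div_lt_one hα₁0).2 hα₁⟩
  have hthreshold : Real.artanh (L / α₁) ≤ α₀ * ε := by
    rwa [ge_iff_le, show 1 / (2 * ε) * Real.log ((α₁ + L) / (α₁ - L))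
      = 1 / 2 * Real.log ((α₁ + L) / (α₁ - L)) / ε by field_simp,
      ← Real.artanh_div_eq_half_log hα₁0 ⟨by linarith, hα₁.le⟩, div_le_iff₀ hε0] at hα₀
  have harg : α₁ * Real.tanh (α₀ * x) ≤ -L := calc
    α₁ * Real.tanh (α₀ * x) ≤ α₁ * -(L / α₁) := by
      gcongr
      exact Real.tanh_mul_le_neg_of_artanh_le hLα₁ hε0 hthreshold hx
    _ = -L := by field_simp
  rw [HTAF, sigmoid_eq_real_sigmoid, abs_of_nonneg (Real.sigmoid_nonneg _)]
  calc Real.sigmoid (α₁ * Real.tanh (α₀ * x)) ≤ Real.sigmoid (-L) := Real.sigmoid_le harg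
    _ = ε := Real.sigmoid_neg_log_one_sub_div ⟨hε0, by linarith⟩
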